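/- Under the dependence assumption (conditional rejection probability at most α_j under true nulls and at most ρ̄_j under false nulls), any Generalized Alpha Investing procedure controls mFDR_η at level α: for every m, E(V(m))/(E(R(m)) + η) ≤ α. -/

import Mathlib

/-!
The process `A(j) = α R(j) - V(j) + α η - W(j)` has nonnegative expected increments: given the
rejection history, the `j`-th step pays `Φ` and earns `α - Ψ` (or `α - 1 - Ψ` under a true null)
per rejection, and the bound on `Ψ` together with the bound on the conditional rejection
probability makes the expected gain nonnegative. Summing the increments,
`E V(m) ≤ α (E R(m) + η) - E W(m) ≤ α (E R(m) + η)`.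
-/

open MeasureTheory

/-- The event that the rejection history of the first `j-1` tests equals the
outcome pattern `r` (rejection indicators take values in `{0,1}`). -/
def histEvent {Ω : Type*} (R : ℕ → Ω → ℝ) (j : ℕ) (r : ℕ → Bool) : Set Ω :=
  {ω | ∀ i, 1 ≤ i → i < j → R i ω = if r i then 1 else 0}

lemma Finset.sum_Icc_one_pred_sub {G : Type*} [AddCommGroup G] (f : ℕ → G) (m : ℕ) :
    ∑ j ∈ Finset.Icc 1 m, (f (j - 1) - f j) = f 0 - f m := by
  induction m with
  | zero => simp
  | succ n ih =>
    rw [Finset.sum_Icc_succ_top (by omega), ih, Nat.add_sub_cancel]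
    abel

lemma indicator_setOf_eq_one_of_zero_or_one {Ω : Type*} {X : Ω → ℝ}
    (hX : ∀ ω, X ω = 0 ∨ X ω = 1) : {ω | X ω = 1}.indicator 1 = X := by
  ext ω
  rcases hX ω with h | h <;> simp [Set.indicator, h]

section ZeroOneValued

variable {Ω : Type*} [MeasurableSpace Ω] {μ : Measure Ω}

lemma integrable_of_zero_or_one [IsFiniteMeasure μ] {X : Ω → ℝ} (hXm : Measurable X)
    (hX : ∀ ω, X ω = 0 ∨ X ω = 1) : Integrable X μ :=
  Integrable.of_bound hXm.aestronglyMeasurable 1 <| .of_forall fun ω => by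
    rcases hX ω with h | h <;> simp [h]

lemma setIntegral_sub_mul_add_nonneg_of_measure_inter_le [IsFiniteMeasure μ] {X : Ω → ℝ}
    (hXm : Measurable X) (hX : ∀ ω, X ω = 0 ∨ X ω = 1) {E : Set Ω} {κ φ ψ a : ℝ}
    (hκ : 0 < κ) (hφ : 0 ≤ φ) (hψ : ψ ≤ φ / κ + a)
    (hXE : μ ({ω | X ω = 1} ∩ E) ≤ ENNReal.ofReal κ * μ E) :
    0 ≤ ∫ ω in E, ((a - ψ) * X ω + φ) ∂μ := by
  have hB : MeasurableSet {ω | X ω = 1} := hXm (measurableSet_singleton 1)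
  have hp : μ.real ({ω | X ω = 1} ∩ E) ≤ κ * μ.real E := by
    simpa [measureReal_def, ENNReal.toReal_mul, hκ.le] using
      ENNReal.toReal_mono (by finiteness) hXE
  have hintX : ∫ ω in E, X ω ∂μ = μ.real ({ω | X ω = 1} ∩ E) := by
    conv_lhs => rw [← indicator_setOf_eq_one_of_zero_or_one hX]
    rw [setIntegral_indicator hB, Set.inter_comm]
    simp
  rw [integral_add ((integrable_of_zero_or_one hXm hX).integrableOn.const_mul _)
    (integrableOn_const (by finiteness)), integral_const_mul, hintX, setIntegral_const,
    smul_eq_mul]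
  have hψκ : κ * ψ ≤ φ + κ * a := by
    have := mul_le_mul_of_nonneg_left hψ hκ.le
    rwa [mul_add, mul_div_cancel₀ _ hκ.ne'] at this
  nlinarith [measureReal_nonneg (μ := μ) (s := {ω | X ω = 1} ∩ E),
    measureReal_nonneg (μ := μ) (s := E)]

end ZeroOneValued

section History

variable {Ω : Type*} {R : ℕ → Ω → ℝ} {j : ℕ}

lemma measurableSet_histEvent [MeasurableSpace Ω] (hR : ∀ i, Measurable (R i)) (r : ℕ → Bool) :
    MeasurableSet (histEvent R j r) := by
  simp only [histEvent, Set.ofPred_forall]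
  exact .iInter fun i => .iInter fun _ => .iInter fun _ => hR i (measurableSet_singleton _)

lemma disjoint_histEvent {r r' : ℕ → Bool} {i : ℕ} (hi : 1 ≤ i) (hij : i < j) (h : r i ≠ r' i) :
    Disjoint (histEvent R j r) (histEvent R j r') := by
  refine Set.disjoint_left.2 fun ω hω hω' => h ?_
  have := (hω i hi hij).symm.trans (hω' i hi hij)
  revert h this
  cases r i <;> cases r' i <;> norm_num

lemma iUnion_histEvent_powerset (hR01 : ∀ i ω, R i ω = 0 ∨ R i ω = 1) :
    ⋃ S ∈ (Finset.Ico 1 j).powerset, histEvent R j (· ∈ S) = Set.univ := by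
  refine Set.eq_univ_of_forall fun ω => Set.mem_biUnion (x := {i ∈ Finset.Ico 1 j | R i ω = 1})
    (Finset.mem_powerset.2 (Finset.filter_subset _ _)) fun i hi hij => ?_
  rcases hR01 i ω with h | h <;> simp [h, hi, hij]

lemma integral_eq_sum_setIntegral_histEvent [MeasurableSpace Ω] {μ : Measure Ω}
    (hR : ∀ i, Measurable (R i)) (hR01 : ∀ i ω, R i ω = 0 ∨ R i ω = 1) {f : Ω → ℝ}
    (hf : Integrable f μ) :
    ∫ ω, f ω ∂μ = ∑ S ∈ (Finset.Ico 1 j).powerset, ∫ ω in histEvent R j (· ∈ S), f ω ∂μ := by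
  rw [← setIntegral_univ, ← iUnion_histEvent_powerset hR01]
  refine integral_biUnion_finset _ (fun S _ => measurableSet_histEvent hR _)
    (fun S hS T hT hST => ?_) fun S _ => hf.integrableOn
  obtain ⟨i, hi⟩ : ∃ i, ¬(i ∈ S ↔ i ∈ T) := by simpa [Finset.ext_iff] using hST
  have hiIco : i ∈ Finset.Ico 1 j := by
    by_cases hiS : i ∈ S
    · exact Finset.mem_powerset.1 hS hiS
    · exact Finset.mem_powerset.1 hT (by tauto)
  obtain ⟨hi1, hij⟩ := Finset.mem_Ico.1 hiIco
  exact disjoint_histEvent hi1 hij (by simpa using hi)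

end History

section Increment

variable {Ω : Type*} [MeasurableSpace Ω] {μ : Measure Ω}

/-- On the history event of `rr` the increment is `(a - Ψ rr) * R j + Φ rr`, with `a = α` for a
false null and `a = α - 1` for a true null. -/
lemma integral_gai_increment_nonneg [IsFiniteMeasure μ] {α ρ : ℝ} {R : ℕ → Ω → ℝ}
    {V W W' : Ω → ℝ} {j : ℕ} {null : Bool} {Φ Ψ A : (ℕ → Bool) → ℝ}
    (hRmeas : ∀ i, Measurable (R i)) (hR01 : ∀ i ω, R i ω = 0 ∨ R i ω = 1)
    (hV : ∀ ω, V ω = if null then R j ω else 0) (hVint : Integrable V μ)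
    (hA : ∀ rr, 0 < A rr) (hρ : 0 < ρ) (hΦ : ∀ rr, 0 ≤ Φ rr)
    (hΨ : ∀ rr, Ψ rr ≤ min (Φ rr / ρ + α) (Φ rr / A rr + α - 1))
    (hWupd : ∀ rr, ∀ ω ∈ histEvent R j rr, W' ω = W ω - Φ rr + R j ω * Ψ rr)
    (hWint : Integrable W μ) (hW'int : Integrable W' μ)
    (hcondNull : null = true → ∀ rr, μ ({ω | R j ω = 1} ∩ histEvent R j rr) ≤
      ENNReal.ofReal (A rr) * μ (histEvent R j rr))
    (hcondAlt : null = false → ∀ rr, μ ({ω | R j ω = 1} ∩ histEvent R j rr) ≤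
      ENNReal.ofReal ρ * μ (histEvent R j rr)) :
    0 ≤ ∫ ω, α * R j ω - V ω + (W ω - W' ω) ∂μ := by
  have hRint := integrable_of_zero_or_one (μ := μ) (hRmeas j) (hR01 j)
  rw [integral_eq_sum_setIntegral_histEvent hRmeas hR01
    (((hRint.const_mul α).sub' hVint).fun_add (hWint.sub' hW'int))]
  refine Finset.sum_nonneg fun S _ => ?_
  set rr : ℕ → Bool := (· ∈ S)
  obtain ⟨κ, a, hκ, hψ, hcond, hgain⟩ : ∃ κ a, 0 < κ ∧ Ψ rr ≤ Φ rr / κ + a ∧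
      μ ({ω | R j ω = 1} ∩ histEvent R j rr) ≤ ENNReal.ofReal κ * μ (histEvent R j rr) ∧
      ∀ ω ∈ histEvent R j rr, α * R j ω - V ω + (W ω - W' ω) = (a - Ψ rr) * R j ω + Φ rr := by
    cases null
    · refine ⟨ρ, α, hρ, (hΨ rr).trans (min_le_left _ _), hcondAlt rfl rr, fun ω hω => ?_⟩
      rw [hV, hWupd rr ω hω]
      simp only [Bool.false_eq_true, if_false]
      ring
    · refine ⟨A rr, α - 1, hA rr, by linarith [(hΨ rr).trans (min_le_right _ _)],
        hcondNull rfl rr, fun ω hω => ?_⟩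
      rw [hV, hWupd rr ω hω, if_pos rfl]
      ring
  rw [setIntegral_congr_fun (measurableSet_histEvent hRmeas _) hgain]
  exact setIntegral_sub_mul_add_nonneg_of_measure_inter_le (hRmeas j) (hR01 j) hκ (hΦ rr) hψ hcond

lemma integral_sum_le_of_integral_increment_nonneg {α η : ℝ} {R V W : ℕ → Ω → ℝ} {m : ℕ}
    (hRint : ∀ i, Integrable (R i) μ) (hVint : ∀ i, Integrable (V i) μ)
    (hWint : ∀ i, Integrable (W i) μ) (hW0 : ∫ ω, W 0 ω ∂μ = α * η) (hWm : ∀ ω, 0 ≤ W m ω)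
    (hinc : ∀ j ∈ Finset.Icc 1 m,
      0 ≤ ∫ ω, α * R j ω - V j ω + (W (j - 1) ω - W j ω) ∂μ) :
    ∫ ω, ∑ i ∈ Finset.Icc 1 m, V i ω ∂μ ≤ α * (∫ ω, ∑ i ∈ Finset.Icc 1 m, R i ω ∂μ + η) := by
  have hlin : ∀ j, ∫ ω, α * R j ω - V j ω + (W (j - 1) ω - W j ω) ∂μ =
      α * ∫ ω, R j ω ∂μ - ∫ ω, V j ω ∂μ + (∫ ω, W (j - 1) ω ∂μ - ∫ ω, W j ω ∂μ) := fun j => by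
    have hαR : Integrable (fun ω => α * R j ω) μ := (hRint j).const_mul α
    rw [integral_add (hαR.sub' (hVint j)) ((hWint _).sub' (hWint j)),
      integral_sub hαR (hVint j), integral_const_mul, integral_sub (hWint _) (hWint j)]
  have hsum := Finset.sum_nonneg hinc
  simp only [hlin, Finset.sum_add_distrib, Finset.sum_sub_distrib, ← Finset.mul_sum,
    Finset.sum_Icc_one_pred_sub fun j => ∫ ω, W j ω ∂μ, hW0] at hsum
  rw [integral_finsetSum _ fun i _ => hVint i, integral_finsetSum _ fun i _ => hRint i]
  linarith [integral_nonneg (μ := μ) (f := W m) hWm]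

end Increment

theorem gai_controls_mfdr_general
    {Ω : Type*} [MeasurableSpace Ω] (μ : Measure Ω) [IsProbabilityMeasure μ]
    (α η : ℝ) (hη : 0 < η)
    (R V : ℕ → Ω → ℝ) (W : ℕ → Ω → ℝ)
    (isNull : ℕ → Bool)
    (Φ Ψ A : ℕ → (ℕ → Bool) → ℝ) (ρ : ℕ → ℝ)
    (hRmeas : ∀ i, Measurable (R i))
    (hR01 : ∀ i ω, R i ω = 0 ∨ R i ω = 1)
    (hV : ∀ i ω, V i ω = if isNull i then R i ω else 0)
    (hA : ∀ j rr, 0 < A j rr ∧ A j rr < 1)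
    (hρ : ∀ j, 0 < ρ j ∧ ρ j ≤ 1)
    (hΦ : ∀ j rr, 0 ≤ Φ j rr)
    (hΨ : ∀ j rr, 0 ≤ Ψ j rr ∧
      Ψ j rr ≤ min (Φ j rr / ρ j + α) (Φ j rr / A j rr + α - 1))
    (hW0 : ∀ ω, W 0 ω = α * η)
    (hWupd : ∀ j, 1 ≤ j → ∀ rr : ℕ → Bool, ∀ ω ∈ histEvent R j rr,
      W j ω = W (j - 1) ω - Φ j rr + R j ω * Ψ j rr)
    (hWnn : ∀ j ω, 0 ≤ W j ω)
    (hWint : ∀ j, Integrable (W j) μ)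
    (hcondNull : ∀ j, 1 ≤ j → isNull j = true → ∀ rr : ℕ → Bool,
      μ ({ω | R j ω = 1} ∩ histEvent R j rr) ≤
        ENNReal.ofReal (A j rr) * μ (histEvent R j rr))
    (hcondAlt : ∀ j, 1 ≤ j → isNull j = false → ∀ rr : ℕ → Bool,
      μ ({ω | R j ω = 1} ∩ histEvent R j rr) ≤
        ENNReal.ofReal (ρ j) * μ (histEvent R j rr)) :
    ∀ m : ℕ,
      (∫ ω, (∑ i ∈ Finset.Icc 1 m, V i ω) ∂μ) /
          ((∫ ω, (∑ i ∈ Finset.Icc 1 m, R i ω) ∂μ) + η) ≤ α := by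
  intro m
  have hRint i : Integrable (R i) μ := integrable_of_zero_or_one (hRmeas i) (hR01 i)
  have hVint i : Integrable (V i) μ := by
    rw [funext (hV i)]
    cases isNull i <;> simp [hRint i]
  have hW0int : ∫ ω, W 0 ω ∂μ = α * η := by simp [hW0]
  have hmfdr := integral_sum_le_of_integral_increment_nonneg hRint hVint hWint hW0int (hWnn m)
    fun j hj => by
      have hj1 := (Finset.mem_Icc.1 hj).1
      exact integral_gai_increment_nonneg hRmeas hR01 (hV j) (hVint j) (fun rr => (hA j rr).1)
        (hρ j).1 (hΦ j) (fun rr => (hΨ j rr).2) (hWupd j hj1) (hWint _) (hWint j)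
        (hcondNull j hj1) (hcondAlt j hj1)
  have hRsum : 0 ≤ ∫ ω, ∑ i ∈ Finset.Icc 1 m, R i ω ∂μ :=
    integral_nonneg fun ω => Finset.sum_nonneg fun i _ => by
      rcases hR01 i ω with h | h <;> simp [h]
  rw [div_le_iff₀ (by linarith)]
  linarith

/-- Under the dependence assumption (conditional rejection probability at most
`α_j` for true nulls and at most `ρ̄_j` for false nulls, given any rejection
history), any Generalized Alpha Investing procedure controls `mFDR_η` at level
`α`: for every `m`, `E(V(m)) / (E(R(m)) + η) ≤ α`. -/
theorem gai_controls_mfdr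
    {Ω : Type*} [MeasurableSpace Ω] (μ : Measure Ω) [IsProbabilityMeasure μ]
    (α η : ℝ) (hα0 : 0 < α) (hα1 : α < 1) (hη : 0 < η)
    (R V : ℕ → Ω → ℝ) (W : ℕ → Ω → ℝ)
    (isNull : ℕ → Bool)
    (Φ Ψ A : ℕ → (ℕ → Bool) → ℝ) (ρ : ℕ → ℝ)
    (hRmeas : ∀ i, Measurable (R i))
    (hR01 : ∀ i ω, R i ω = 0 ∨ R i ω = 1)
    (hV : ∀ i ω, V i ω = if isNull i then R i ω else 0)
    (hA : ∀ j rr, 0 < A j rr ∧ A j rr < 1)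
    (hρ : ∀ j, 0 < ρ j ∧ ρ j ≤ 1)
    (hΦ : ∀ j rr, 0 ≤ Φ j rr)
    (hΨ : ∀ j rr, 0 ≤ Ψ j rr ∧
      Ψ j rr ≤ min (Φ j rr / ρ j + α) (Φ j rr / A j rr + α - 1))
    (hW0 : ∀ ω, W 0 ω = α * η)
    (hWupd : ∀ j, 1 ≤ j → ∀ rr : ℕ → Bool, ∀ ω ∈ histEvent R j rr,
      W j ω = W (j - 1) ω - Φ j rr + R j ω * Ψ j rr)
    (hWnn : ∀ j ω, 0 ≤ W j ω)
    (hWint : ∀ j, Integrable (W j) μ)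
    (hcondNull : ∀ j, 1 ≤ j → isNull j = true → ∀ rr : ℕ → Bool,
      μ ({ω | R j ω = 1} ∩ histEvent R j rr) ≤
        ENNReal.ofReal (A j rr) * μ (histEvent R j rr))
    (hcondAlt : ∀ j, 1 ≤ j → isNull j = false → ∀ rr : ℕ → Bool,
      μ ({ω | R j ω = 1} ∩ histEvent R j rr) ≤
        ENNReal.ofReal (ρ j) * μ (histEvent R j rr)) :
    ∀ m : ℕ,
      (∫ ω, (∑ i ∈ Finset.Icc 1 m, V i ω) ∂μ) /
          ((∫ ω, (∑ i ∈ Finset.Icc 1 m, R i ω) ∂μ) + η) ≤ α :=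
  gai_controls_mfdr_general μ α η hη R V W isNull Φ Ψ A ρ hRmeas hR01 hV hA hρ hΦ hΨ hW0 hWupd hWnn
    hWint hcondNull hcondAlt
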